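/- If G is a multi-GGS group on the m-adic tree defined by a homomorphism ω: D → A_m^{m-1} (constant sequence), ι is an automorphism of D, and α ∈ Norm_{Sym(X)}(A_m) ∩ St_{Sym(X)}(0), then the multi-GGS group defined by p(α) ∘ ω ∘ ι is conjugate to G in Aut T; indeed, the constant-portrait automorphism κ(α) conjugates one to the other up to the adjustment of ι by the power map induced by α on A_m. -/

import Mathlib

/-!
The constant-portrait automorphism `κ(α)` acts letter by letter. Conjugating by it turns the
rooted automorphism with label `π` into the one with label `α⁻¹ π α`, and, when `α` fixes the
spine letter `0`, turns the directed automorphism with labels `ω d y` into the one with labels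
`α⁻¹ (ω d (α y)) α`. Since `α` normalizes the cyclic group `A_m = ⟨ρ⟩`, conjugation by `α`
acts on `A_m` as a power map `π ↦ π ^ k`, with `k` invertible modulo `m = ord ρ`. Hence the
rooted generator goes to a generator of the same cyclic group, and the directed generators of
`ω` go to those of `p(α) ∘ ω ∘ ι`, reindexed by the bijection `d ↦ ι⁻¹ (d ^ k)` of `D`
(bijective because the exponent of `D` divides `m`).
-/

/-- A tree automorphism of the `m`-adic tree, identified with the free monoid
`List (Fin m)`: a length-preserving and prefix-preserving bijection. -/
def IsTreeAut {m : ℕ} (f : Equiv.Perm (List (Fin m))) : Prop :=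
  (∀ u : List (Fin m), (f u).length = u.length) ∧
    ∀ u v : List (Fin m), u <+: v → f u <+: f v

/-- `s` is the section of `f` at the vertex `u`: `f (u v) = f(u) s(v)` for all `v`. -/
def HasSectionAt {m : ℕ} (f : Equiv.Perm (List (Fin m))) (u : List (Fin m))
    (s : Equiv.Perm (List (Fin m))) : Prop :=
  ∀ v : List (Fin m), f (u ++ v) = f u ++ s v

/-- `π ∈ Sym(X)` is the label of `f` at the vertex `u`: `f (u x) = f(u) π(x)`. -/
def HasLabelAt {m : ℕ} (f : Equiv.Perm (List (Fin m))) (u : List (Fin m))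
    (π : Equiv.Perm (Fin m)) : Prop :=
  ∀ x : Fin m, f (u ++ [x]) = f u ++ [π x]
def dAux {m : ℕ} (x : Fin m) (ω : ℕ → Fin m → Equiv.Perm (Fin m)) :
    ℕ → List (Fin m) → List (Fin m)
  | _, [] => []
  | _, [y] => [y]
  | k, y :: z :: v => if y = x then y :: dAux x ω (k + 1) (z :: v) else y :: ω k y z :: v

theorem dAux_length {m : ℕ} (x : Fin m) (ω : ℕ → Fin m → Equiv.Perm (Fin m)) :
    ∀ (k : ℕ) (l : List (Fin m)), (dAux x ω k l).length = l.length
  | _, [] => rfl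
  | _, [_] => rfl
  | k, y :: z :: v => by
    by_cases h : y = x
    · simp [dAux, h, dAux_length x ω (k + 1) (z :: v)]
    · simp [dAux, h]

theorem dAux_inv {m : ℕ} (x : Fin m) (ω : ℕ → Fin m → Equiv.Perm (Fin m)) :
    ∀ (k : ℕ) (l : List (Fin m)),
      dAux x (fun k y => (ω k y)⁻¹) k (dAux x ω k l) = l
  | _, [] => rfl
  | _, [_] => rfl
  | k, y :: z :: v => by
    by_cases h : y = x
    · have hlen := dAux_length x ω (k + 1) (z :: v)
      obtain ⟨a, w, hw⟩ : ∃ a w, dAux x ω (k + 1) (z :: v) = a :: w := by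
        cases hl : dAux x ω (k + 1) (z :: v) with
        | nil => rw [hl] at hlen; simp at hlen
        | cons a w => exact ⟨a, w, rfl⟩
      have IH := dAux_inv x ω (k + 1) (z :: v)
      have e1 : dAux x ω k (y :: z :: v) = y :: a :: w := by simp [dAux, h, hw]
      have e2 : dAux x (fun k y => (ω k y)⁻¹) k (y :: a :: w)
          = y :: dAux x (fun k y => (ω k y)⁻¹) (k + 1) (a :: w) := by simp [dAux, h]
      rw [e1, e2, ← hw, IH]
    · simp [dAux, h]

def directedAut {m : ℕ} (x : Fin m) (ω : ℕ → Fin m → Equiv.Perm (Fin m)) :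
    Equiv.Perm (List (Fin m)) where
  toFun := dAux x ω 0
  invFun := dAux x (fun k y => (ω k y)⁻¹) 0
  left_inv l := dAux_inv x ω 0 l
  right_inv l := by
    have h := dAux_inv x (fun k y => (ω k y)⁻¹) 0 l
    simpa [inv_inv] using h

/-- The rooted automorphism induced by `π ∈ Sym(X)`. -/
def rootedAut {m : ℕ} (π : Equiv.Perm (Fin m)) : Equiv.Perm (List (Fin m)) where
  toFun l := match l with
    | [] => []
    | x :: u => π x :: u
  invFun l := match l with
    | [] => []
    | x :: u => π.symm x :: u
  left_inv l := by cases l <;> simp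
  right_inv l := by cases l <;> simp

/-- The multi-GGS group on the `m`-adic tree defined by the (constant) defining
homomorphism `ω`: it is generated by the rooted automorphism `a` with label
`(0 1 ⋯ m−1)` and the directed automorphisms `d_ω` for `d ∈ D`, spine `0̄`. -/
def mGGS {m : ℕ} [NeZero m] {D : Type*} [CommGroup D]
    (ω : D →* (Fin m → Equiv.Perm (Fin m))) : Subgroup (Equiv.Perm (List (Fin m))) :=
  Subgroup.closure
    ({rootedAut (finRotate m)} ∪
      Set.range (fun d : D => directedAut (0 : Fin m) (fun _ y => ω d y)))

/-- The defining homomorphism `p(α) ∘ ω ∘ ι`, where `p(α)` permutes the coordinates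
of `A_m^{X∖{0}}` by `α`. -/
def pOmega {m : ℕ} {D : Type*} [CommGroup D]
    (ω : D →* (Fin m → Equiv.Perm (Fin m))) (ι : D ≃* D) (α : Equiv.Perm (Fin m)) :
    D →* (Fin m → Equiv.Perm (Fin m)) where
  toFun d y := ω (ι d) (α y)
  map_one' := by funext y; simp
  map_mul' a b := by funext y; simp [map_mul, Pi.mul_apply]

open Equiv Subgroup

section Group

variable {G : Type*} [Group G]

theorem zpow_eq_self_of_dvd_sub_one {g : G} {m : ℕ} {n : ℤ} (hg : g ^ m = 1)
    (h : (m : ℤ) ∣ n - 1) : g ^ n = g := by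
  obtain ⟨t, ht⟩ := h
  rw [show n = m * t + 1 by lia, zpow_add_one, zpow_mul, zpow_natCast, hg, one_zpow, one_mul]

theorem zpowers_zpow_eq {g : G} {k j : ℤ} (h : (g ^ k) ^ j = g) :
    zpowers (g ^ k) = zpowers g :=
  le_antisymm (zpowers_le.2 (zpow_mem (mem_zpowers g) k))
    (zpowers_le.2 (by simpa only [h] using zpow_mem (mem_zpowers (g ^ k)) j))

theorem closure_singleton_zpow_union {g : G} {k j : ℤ} (h : (g ^ k) ^ j = g) (s : Set G) :
    closure ({g ^ k} ∪ s) = closure ({g} ∪ s) := by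
  rw [Subgroup.closure_union, Subgroup.closure_union, ← zpowers_eq_closure, ← zpowers_eq_closure,
    zpowers_zpow_eq h]

theorem inv_mul_mul_eq_zpow_of_mem_zpowers {ρ α π : G} {k : ℤ} (hk : α⁻¹ * ρ * α = ρ ^ k)
    (hπ : π ∈ zpowers ρ) : α⁻¹ * π * α = π ^ k := by
  obtain ⟨t, rfl⟩ := mem_zpowers_iff.1 hπ
  calc α⁻¹ * ρ ^ t * α = (α⁻¹ * ρ * α) ^ t := by simpa using (conj_zpow (a := α⁻¹)).symm
    _ = (ρ ^ t) ^ k := by rw [hk, ← zpow_mul, ← zpow_mul, mul_comm]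

theorem exists_inv_mul_mul_eq_zpow_of_normalizes [Finite G] {ρ α : G}
    (h : ∀ π ∈ zpowers ρ, α * π * α⁻¹ ∈ zpowers ρ) :
    ∃ k j : ℤ, α⁻¹ * ρ * α = ρ ^ k ∧ ρ ^ (k * j) = ρ := by
  have hα : α ∈ normalizer (zpowers ρ : Set G) := mem_normalizer_fintype h
  obtain ⟨k, hk⟩ := mem_zpowers_iff.1 ((mem_normalizer_iff''.1 hα ρ).1 (mem_zpowers ρ))
  obtain ⟨j, hj⟩ := mem_zpowers_iff.1 (h ρ (mem_zpowers ρ))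
  refine ⟨k, j, hk.symm, ?_⟩
  have hconj : (α⁻¹ * ρ * α) ^ j = α⁻¹ * ρ ^ j * α := by simpa using conj_zpow (a := α⁻¹)
  rw [zpow_mul, hk, hconj, hj]
  group

end Group

theorem orderOf_finRotate (m : ℕ) [NeZero m] : orderOf (finRotate m) = m := by
  rcases m with _ | _ | n
  · exact absurd rfl (NeZero.ne 0)
  · simp [finRotate_one, ← Perm.one_def]
  · rw [← Perm.lcm_cycleType, cycleType_finRotate, Multiset.lcm_singleton, normalize_eq]

section TreeAut

variable {m : ℕ}

/-- The automorphism `κ(α)` with constant portrait `α`. -/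
def constPortraitAut (α : Perm (Fin m)) : Perm (List (Fin m)) where
  toFun := List.map α
  invFun := List.map α.symm
  left_inv l := by simp [List.map_map]
  right_inv l := by simp [List.map_map]

theorem isTreeAut_constPortraitAut (α : Perm (Fin m)) : IsTreeAut (constPortraitAut α) := by
  refine ⟨fun u => List.length_map _, ?_⟩
  rintro u _ ⟨t, rfl⟩
  exact ⟨t.map α, (List.map_append ..).symm⟩

def rootedAutHom : Perm (Fin m) →* Perm (List (Fin m)) where
  toFun := rootedAut
  map_one' := Equiv.ext fun l => by cases l <;> rfl
  map_mul' π σ := Equiv.ext fun l => by cases l <;> rfl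

theorem rootedAut_zpow (π : Perm (Fin m)) (n : ℤ) : rootedAut (π ^ n) = rootedAut π ^ n :=
  map_zpow rootedAutHom π n

theorem rootedAut_mul_constPortraitAut (α π : Perm (Fin m)) :
    rootedAut π * constPortraitAut α = constPortraitAut α * rootedAut (α⁻¹ * π * α) :=
  Equiv.ext fun l => by cases l <;> simp [rootedAut, constPortraitAut]

theorem dAux_map {x : Fin m} {α : Perm (Fin m)} (hα : α x = x)
    (Ω : ℕ → Fin m → Perm (Fin m)) :
    ∀ (k : ℕ) (l : List (Fin m)),
      dAux x Ω k (l.map α) = (dAux x (fun k y => α⁻¹ * Ω k (α y) * α) k l).map α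
  | _, [] => rfl
  | _, [_] => rfl
  | k, y :: z :: v => by
    by_cases h : y = x
    · subst h
      simp [dAux, hα, ← dAux_map hα Ω (k + 1) (z :: v)]
    · have hαy : α y ≠ x := fun e => h (α.injective (e.trans hα.symm))
      simp [dAux, h, hαy]

theorem directedAut_mul_constPortraitAut {x : Fin m} {α : Perm (Fin m)} (hα : α x = x)
    (Ω : ℕ → Fin m → Perm (Fin m)) :
    directedAut x Ω * constPortraitAut α
      = constPortraitAut α * directedAut x (fun k y => α⁻¹ * Ω k (α y) * α) :=
  Equiv.ext (dAux_map hα Ω 0)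

theorem conj_inv_eq_of_mul_eq {f g g' : Perm (List (Fin m))} (h : g * f = f * g') :
    MulAut.conj f⁻¹ g = g' := by
  rw [MulAut.conj_apply, inv_inv, mul_assoc, h, inv_mul_cancel_left]

theorem conj_constPortraitAut_inv_directedAut {x : Fin m} {α ρ : Perm (Fin m)} {k : ℤ}
    (hα : α x = x) (hk : α⁻¹ * ρ * α = ρ ^ k) {c : Fin m → Perm (Fin m)}
    (hc : ∀ y, c y ∈ zpowers ρ) :
    MulAut.conj (constPortraitAut α)⁻¹ (directedAut x fun _ y => c y)
      = directedAut x fun _ y => c (α y) ^ k := by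
  rw [conj_inv_eq_of_mul_eq (directedAut_mul_constPortraitAut hα _)]
  simp only [inv_mul_mul_eq_zpow_of_mem_zpowers hk (hc _)]

end TreeAut

theorem mGGS_conjugate_of_twist_general {m : ℕ} [NeZero m] {D : Type*} [CommGroup D]
    (ω : D →* (Fin m → Equiv.Perm (Fin m)))
    (hωA : ∀ (d : D) (y : Fin m), ω d y ∈ Subgroup.zpowers (finRotate m))
    (hexp : ∀ d : D, d ^ m = 1)
    (ι : D ≃* D) (α : Equiv.Perm (Fin m))
    (hα0 : α 0 = 0)
    (hαN : ∀ π ∈ Subgroup.zpowers (finRotate m),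
      α * π * α⁻¹ ∈ Subgroup.zpowers (finRotate m)) :
    ∃ f : Equiv.Perm (List (Fin m)), IsTreeAut f ∧
      Subgroup.map (MulAut.conj f⁻¹).toMonoidHom (mGGS ω) = mGGS (pOmega ω ι α) := by
  obtain ⟨k, j, hk, hkj⟩ := exists_inv_mul_mul_eq_zpow_of_normalizes hαN
  have hm : (m : ℤ) ∣ k * j - 1 := by
    rw [← orderOf_finRotate m, orderOf_dvd_iff_zpow_eq_one, zpow_sub_one, hkj, mul_inv_cancel]
  have hsurj : Function.Surjective fun d : D => ι.symm (d ^ k) := fun e =>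
    ⟨ι e ^ j, show ι.symm ((ι e ^ j) ^ k) = e by
      rw [← zpow_mul, mul_comm, zpow_eq_self_of_dvd_sub_one (hexp _) hm, ι.symm_apply_apply]⟩
  have ha : MulAut.conj (constPortraitAut α)⁻¹ (rootedAut (finRotate m))
      = rootedAut (finRotate m) ^ k := by
    rw [conj_inv_eq_of_mul_eq (rootedAut_mul_constPortraitAut _ _), hk, rootedAut_zpow]
  have hd : (MulAut.conj (constPortraitAut α)⁻¹ ∘ fun d : D => directedAut 0 fun _ y => ω d y)
      = (fun d => directedAut 0 fun _ y => pOmega ω ι α d y) ∘ fun d => ι.symm (d ^ k) := by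
    funext d
    rw [Function.comp_apply, conj_constPortraitAut_inv_directedAut hα0 hk (hωA d)]
    simp [pOmega]
  refine ⟨constPortraitAut α, isTreeAut_constPortraitAut α, ?_⟩
  rw [mGGS, mGGS, MonoidHom.map_closure, Set.image_union, Set.image_singleton, ← Set.range_comp,
    MulEquiv.coe_toMonoidHom, ha, hd, hsurj.range_comp]
  refine closure_singleton_zpow_union (j := j) ?_ _
  rw [← zpow_mul, ← rootedAut_zpow, hkj]

/-- Sufficiency for multi-GGS groups to be conjugate: if `ι` is an automorphism of
`D` and `α ∈ Norm_{Sym(X)}(A_m) ∩ St_{Sym(X)}(0)`, then the multi-GGS group defined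
by `p(α) ∘ ω ∘ ι` is conjugate in `Aut T` to the one defined by `ω`. -/
theorem mGGS_conjugate_of_twist {m : ℕ} [NeZero m] {D : Type*} [CommGroup D]
    (ω : D →* (Fin m → Equiv.Perm (Fin m)))
    (hω0 : ∀ d : D, ω d 0 = 1)
    (hωA : ∀ (d : D) (y : Fin m), ω d y ∈ Subgroup.zpowers (finRotate m))
    (hker : ∀ d : D, ω d = 1 → d = 1)
    (hexp : ∀ d : D, d ^ m = 1)
    (ι : D ≃* D) (α : Equiv.Perm (Fin m))
    (hα0 : α 0 = 0)
    (hαN : ∀ π ∈ Subgroup.zpowers (finRotate m),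
      α * π * α⁻¹ ∈ Subgroup.zpowers (finRotate m)) :
    ∃ f : Equiv.Perm (List (Fin m)), IsTreeAut f ∧
      Subgroup.map (MulAut.conj f⁻¹).toMonoidHom (mGGS ω) = mGGS (pOmega ω ι α) :=
  mGGS_conjugate_of_twist_general ω hωA hexp ι α hα0 hαN
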